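/- (Inequality (2.7), algebraic form.) Let α > 0. Suppose Q̊(ψ) ≥ α ‖ψ‖² for every traceless symmetric bilinear form ψ on E, and Ric(X,X) ≥ (n−1) α ‖X‖² for every X ∈ E. Then for every p ≥ 2 and every totally traceless symmetric p-multilinear map φ : E^p → ℝ, the Weitzenböck quadratic form satisfies Q_p(φ) ≥ p(n+p−2) α ‖φ‖² ≥ 0, and Q_p(φ) = 0 only if φ = 0. -/

import Mathlib

/-!
Slice `φ` along its trailing arguments. With the last `p - 1` arguments fixed, `i ↦ φ(e_i, …)`
is the coordinate vector of some `X`, and the Ricci bound applied to `X` controls the Ricci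
term by `(n - 1) α` times the squared norm of the slice. With the last `p - 2` arguments fixed,
`φ(·, ·, …)` is a traceless symmetric bilinear form `ψ`, and antisymmetry of `R` in its first
pair turns the curvature sum into `-Q̊(ψ) ≤ -α ‖ψ‖²`. Summing over slices, both estimates are in
terms of `‖φ‖²`, and `p (n - 1) α + p (p - 1) α = p (n + p - 2) α`.
-/

open scoped RealInnerProductSpace

/-- The Weitzenböck quadratic form `Q_p` on symmetric `p`-multilinear maps (with
`p = p' + 2 ≥ 2`):
`Q_p(φ) = p Σ Ric(e_i,e_j) φ(e_i,e_{k₂},…) φ(e_j,e_{k₂},…)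
  − p(p−1) Σ R(e_i,e_j,e_k,e_l) φ(e_i,e_k,e_{k₃},…) φ(e_j,e_l,e_{k₃},…)`,
where `Ric(X,Y) = Σ_m R(e_m,X,e_m,Y)`. -/
noncomputable def weitzenbockQ
    {E : Type*} [NormedAddCommGroup E] [InnerProductSpace ℝ E]
    {n : ℕ} (e : OrthonormalBasis (Fin n) ℝ E)
    (R : E →ₗ[ℝ] E →ₗ[ℝ] E →ₗ[ℝ] E →ₗ[ℝ] ℝ)
    (p : ℕ) (φ : MultilinearMap ℝ (fun _ : Fin (p + 2) => E) ℝ) : ℝ :=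
  ((p : ℝ) + 2) *
      (∑ i, ∑ j, ∑ ks : Fin (p + 1) → Fin n,
        (∑ m, R (e m) (e i) (e m) (e j)) *
          φ (Fin.cons (e i) (fun m => e (ks m))) *
          φ (Fin.cons (e j) (fun m => e (ks m))))
    - ((p : ℝ) + 2) * (((p : ℝ) + 2) - 1) *
      (∑ i, ∑ j, ∑ k, ∑ l, ∑ ks : Fin p → Fin n,
        R (e i) (e j) (e k) (e l) *
          φ (Fin.cons (e i) (Fin.cons (e k) (fun m => e (ks m)))) *
          φ (Fin.cons (e j) (Fin.cons (e l) (fun m => e (ks m)))))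

open Finset

theorem Fintype.sum_fin_succ_pi {ι M : Type*} [Fintype ι] [AddCommMonoid M] {q : ℕ}
    (f : (Fin (q + 1) → ι) → M) :
    ∑ t, f t = ∑ i, ∑ ks : Fin q → ι, f (Fin.cons i ks) := by
  rw [← (Fin.consEquiv fun _ => ι).sum_comp f, Fintype.sum_prod_type]
  rfl

theorem Fintype.sum_comp_fin_succ {ι M N : Type*} [Fintype ι] [AddCommMonoid N] {q : ℕ}
    (v : ι → M) (f : (Fin (q + 1) → M) → N) :
    ∑ t : Fin (q + 1) → ι, f (fun m => v (t m)) =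
      ∑ ks : Fin q → ι, ∑ i, f (Fin.cons (v i) (fun m => v (ks m))) := by
  rw [Fintype.sum_fin_succ_pi, sum_comm]
  simp_rw [← Function.comp_def v, Fin.comp_cons]

namespace MultilinearMap

variable {R M N : Type*} [CommSemiring R] [AddCommMonoid M] [Module R M]
  [AddCommMonoid N] [Module R N] {p : ℕ}

theorem cons_cons_comm (φ : MultilinearMap R (fun _ : Fin (p + 2) => M) N)
    (hφ : ∀ σ : Equiv.Perm (Fin (p + 2)), ∀ v : Fin (p + 2) → M, φ (v ∘ σ) = φ v)
    (X Y : M) (v : Fin p → M) :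
    φ (Fin.cons X (Fin.cons Y v)) = φ (Fin.cons Y (Fin.cons X v)) := by
  rw [← hφ (Equiv.swap 0 1) (Fin.cons Y (Fin.cons X v))]
  exact congrArg φ (Matrix.cons_cons_comp_swap_zero_one Y X v).symm

def bilinOfTail (φ : MultilinearMap R (fun _ : Fin (p + 2) => M) N) (v : Fin p → M) :
    M →ₗ[R] M →ₗ[R] N :=
  LinearMap.mk₂ R (fun X Y => φ (Fin.cons X (Fin.cons Y v)))
    (fun X X' Y => φ.cons_add _ X X')
    (fun c X Y => φ.cons_smul _ c X)
    (fun X Y Y' => by simpa using (φ.curryLeft X).cons_add v Y Y')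
    (fun c X Y => by simpa using (φ.curryLeft X).cons_smul v c Y)

theorem eq_zero_of_sum_sq_basis_eq_zero {𝕜 ι E : Type*} [Field 𝕜] [LinearOrder 𝕜]
    [IsStrictOrderedRing 𝕜] [Fintype ι] [AddCommGroup E] [Module 𝕜 E] {q : ℕ}
    (b : Module.Basis ι 𝕜 E) (φ : MultilinearMap 𝕜 (fun _ : Fin q => E) 𝕜)
    (h : ∑ t : Fin q → ι, φ (fun m => b (t m)) ^ 2 = 0) : φ = 0 := by
  refine Module.Basis.ext_multilinear (fun _ => b) fun t => ?_
  rw [sum_eq_zero_iff_of_nonneg fun _ _ => sq_nonneg _] at h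
  simpa using h t (mem_univ t)

end MultilinearMap

theorem LinearMap.sum_sum_apply_mul_mul {R M ι : Type*} [CommSemiring R] [AddCommMonoid M]
    [Module R M] [Fintype ι] (B : M →ₗ[R] M →ₗ[R] R) (v : ι → M) (c : ι → R) :
    ∑ i, ∑ j, B (v i) (v j) * c i * c j = B (∑ i, c i • v i) (∑ j, c j • v j) := by
  simp only [map_sum, map_smul, LinearMap.sum_apply, LinearMap.smul_apply, smul_eq_mul, mul_sum]
  rw [sum_comm]
  exact sum_congr rfl fun i _ => sum_congr rfl fun j _ => by ring

theorem sum_curvature_pairing_eq_neg {R M ι : Type*} [CommRing R] [AddCommGroup M]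
    [Module R M] [Fintype ι] (Rm : M →ₗ[R] M →ₗ[R] M →ₗ[R] M →ₗ[R] R)
    (hR : ∀ X Y Z W : M, Rm X Y Z W = - Rm Y X Z W) (ψ : M →ₗ[R] M →ₗ[R] R) (v : ι → M) :
    ∑ i, ∑ j, ∑ k, ∑ l, Rm (v i) (v j) (v k) (v l) * ψ (v i) (v k) * ψ (v j) (v l) =
      -∑ i, ∑ j, ∑ k, ∑ l, Rm (v i) (v k) (v l) (v j) * ψ (v k) (v l) * ψ (v i) (v j) := by
  refine sum_comm.trans ?_
  simp only [← sum_neg_distrib]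
  refine sum_congr rfl fun j _ => (sum_congr rfl fun i _ => sum_comm).trans ?_
  refine sum_comm.trans (sum_congr rfl fun l _ => sum_congr rfl fun i _ =>
    sum_congr rfl fun k _ => ?_)
  rw [hR]
  ring

section OrthonormalBasis

variable {E ι : Type*} [NormedAddCommGroup E] [InnerProductSpace ℝ E] [Fintype ι]
  (e : OrthonormalBasis ι ℝ E) (R : E →ₗ[ℝ] E →ₗ[ℝ] E →ₗ[ℝ] E →ₗ[ℝ] ℝ)

theorem OrthonormalBasis.norm_sum_smul_sq (c : ι → ℝ) : ‖∑ i, c i • e i‖ ^ 2 = ∑ i, c i ^ 2 := by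
  rw [← real_inner_self_eq_norm_sq]
  simpa [sq] using e.orthonormal.inner_sum c c univ

theorem ricci_quadratic_lower_bound {κ : ℝ}
    (hRic : ∀ X : E, κ * ‖X‖ ^ 2 ≤ ∑ m, R (e m) X (e m) X) (c : ι → ℝ) :
    κ * ∑ i, c i ^ 2 ≤ ∑ i, ∑ j, (∑ m, R (e m) (e i) (e m) (e j)) * c i * c j := by
  have h := (∑ m, (R (e m)).flip (e m)).sum_sum_apply_mul_mul e c
  simp only [LinearMap.sum_apply, LinearMap.flip_apply] at h
  rw [h, ← e.norm_sum_smul_sq]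
  exact hRic _

end OrthonormalBasis

section Weitzenbock

variable {E : Type*} [NormedAddCommGroup E] [InnerProductSpace ℝ E] {n : ℕ}
  (e : OrthonormalBasis (Fin n) ℝ E) (R : E →ₗ[ℝ] E →ₗ[ℝ] E →ₗ[ℝ] E →ₗ[ℝ] ℝ)

theorem ricci_term_lower_bound {κ : ℝ} (hRic : ∀ X : E, κ * ‖X‖ ^ 2 ≤ ∑ m, R (e m) X (e m) X)
    {q : ℕ} (f : (Fin (q + 1) → E) → ℝ) :
    κ * ∑ t : Fin (q + 1) → Fin n, f (fun m => e (t m)) ^ 2 ≤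
      ∑ i, ∑ j, ∑ ks : Fin q → Fin n, (∑ m, R (e m) (e i) (e m) (e j)) *
        f (Fin.cons (e i) (fun m => e (ks m))) * f (Fin.cons (e j) (fun m => e (ks m))) := by
  calc κ * ∑ t : Fin (q + 1) → Fin n, f (fun m => e (t m)) ^ 2
      = ∑ ks : Fin q → Fin n, κ * ∑ i, f (Fin.cons (e i) (fun m => e (ks m))) ^ 2 := by
        rw [Fintype.sum_comp_fin_succ e (fun w => f w ^ 2), mul_sum]
    _ ≤ ∑ ks : Fin q → Fin n, ∑ i, ∑ j, (∑ m, R (e m) (e i) (e m) (e j)) *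
          f (Fin.cons (e i) (fun m => e (ks m))) * f (Fin.cons (e j) (fun m => e (ks m))) :=
        sum_le_sum fun ks _ => ricci_quadratic_lower_bound e R hRic _
    _ = _ := sum_comm.trans (sum_congr rfl fun i _ => sum_comm)

theorem curvature_term_upper_bound (hR : ∀ X Y Z W : E, R X Y Z W = - R Y X Z W) {α : ℝ}
    (hQ : ∀ ψ : E →ₗ[ℝ] E →ₗ[ℝ] ℝ, (∀ X Y : E, ψ X Y = ψ Y X) →
      (∑ i, ψ (e i) (e i)) = 0 →
      α * (∑ i, ∑ j, (ψ (e i) (e j)) ^ 2) ≤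
        ∑ i, ∑ j, ∑ k, ∑ l, R (e i) (e k) (e l) (e j) * ψ (e k) (e l) * ψ (e i) (e j))
    {p : ℕ} (φ : MultilinearMap ℝ (fun _ : Fin (p + 2) => E) ℝ)
    (hφsymm : ∀ σ : Equiv.Perm (Fin (p + 2)), ∀ v : Fin (p + 2) → E, φ (v ∘ σ) = φ v)
    (hφtr : ∀ v : Fin p → E, (∑ i, φ (Fin.cons (e i) (Fin.cons (e i) v))) = 0) :
    ∑ i, ∑ j, ∑ k, ∑ l, ∑ ks : Fin p → Fin n, R (e i) (e j) (e k) (e l) *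
        φ (Fin.cons (e i) (Fin.cons (e k) (fun m => e (ks m)))) *
        φ (Fin.cons (e j) (Fin.cons (e l) (fun m => e (ks m)))) ≤
      -(α * ∑ t : Fin (p + 2) → Fin n, φ (fun m => e (t m)) ^ 2) := by
  set ψ := fun ks : Fin p → Fin n => φ.bilinOfTail (fun m => e (ks m))
  have hN : ∑ t : Fin (p + 2) → Fin n, φ (fun m => e (t m)) ^ 2 =
      ∑ ks, ∑ i, ∑ j, ψ ks (e i) (e j) ^ 2 := by
    rw [Fintype.sum_comp_fin_succ e (fun w => φ w ^ 2),
      Fintype.sum_comp_fin_succ e (fun w => ∑ i, φ (Fin.cons (e i) w) ^ 2)]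
    exact sum_congr rfl fun ks _ => sum_comm
  calc _ = ∑ ks, ∑ i, ∑ j, ∑ k, ∑ l,
        R (e i) (e j) (e k) (e l) * ψ ks (e i) (e k) * ψ ks (e j) (e l) := by
        simp only [sum_comm (t := (univ : Finset (Fin p → Fin n)))]
        rfl
    _ ≤ ∑ ks, -(α * ∑ i, ∑ j, ψ ks (e i) (e j) ^ 2) := by
        refine sum_le_sum fun ks _ => ?_
        rw [sum_curvature_pairing_eq_neg R hR]
        refine neg_le_neg (hQ _ (fun X Y => ?_) (hφtr _))
        exact φ.cons_cons_comm hφsymm X Y _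
    _ = _ := by rw [sum_neg_distrib, ← mul_sum, hN]

theorem mul_sum_sq_le_weitzenbockQ (hR : ∀ X Y Z W : E, R X Y Z W = - R Y X Z W) {α : ℝ}
    (hQ : ∀ ψ : E →ₗ[ℝ] E →ₗ[ℝ] ℝ, (∀ X Y : E, ψ X Y = ψ Y X) →
      (∑ i, ψ (e i) (e i)) = 0 →
      α * (∑ i, ∑ j, (ψ (e i) (e j)) ^ 2) ≤
        ∑ i, ∑ j, ∑ k, ∑ l, R (e i) (e k) (e l) (e j) * ψ (e k) (e l) * ψ (e i) (e j))
    (hRic : ∀ X : E, ((n : ℝ) - 1) * α * ‖X‖ ^ 2 ≤ ∑ m, R (e m) X (e m) X)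
    {p : ℕ} (φ : MultilinearMap ℝ (fun _ : Fin (p + 2) => E) ℝ)
    (hφsymm : ∀ σ : Equiv.Perm (Fin (p + 2)), ∀ v : Fin (p + 2) → E, φ (v ∘ σ) = φ v)
    (hφtr : ∀ v : Fin p → E, (∑ i, φ (Fin.cons (e i) (Fin.cons (e i) v))) = 0) :
    ((p : ℝ) + 2) * ((n : ℝ) + ((p : ℝ) + 2) - 2) * α *
        (∑ t : Fin (p + 2) → Fin n, (φ (fun m => e (t m))) ^ 2) ≤
      weitzenbockQ e R p φ := by
  have hRicci := ricci_term_lower_bound e R hRic φ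
  have hCurv := curvature_term_upper_bound e R hR hQ φ hφsymm hφtr
  unfold weitzenbockQ
  linarith [mul_le_mul_of_nonneg_left hRicci (by positivity : (0 : ℝ) ≤ p + 2),
    mul_le_mul_of_nonneg_left hCurv (by positivity : (0 : ℝ) ≤ (p + 2) * (p + 1))]

end Weitzenbock

theorem stmt_12
    {E : Type*} [NormedAddCommGroup E] [InnerProductSpace ℝ E]
    {n : ℕ} (hn : 2 ≤ n) (e : OrthonormalBasis (Fin n) ℝ E)
    (R : E →ₗ[ℝ] E →ₗ[ℝ] E →ₗ[ℝ] E →ₗ[ℝ] ℝ)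
    (hR1 : ∀ X Y Z W : E, R X Y Z W = - R Y X Z W)
    (α : ℝ) (hα : 0 < α)
    (hQ : ∀ ψ : E →ₗ[ℝ] E →ₗ[ℝ] ℝ, (∀ X Y : E, ψ X Y = ψ Y X) →
      (∑ i, ψ (e i) (e i)) = 0 →
      α * (∑ i, ∑ j, (ψ (e i) (e j)) ^ 2) ≤
        ∑ i, ∑ j, ∑ k, ∑ l, R (e i) (e k) (e l) (e j) * ψ (e k) (e l) * ψ (e i) (e j))
    (hRic : ∀ X : E, ((n : ℝ) - 1) * α * ‖X‖ ^ 2 ≤ ∑ m, R (e m) X (e m) X)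
    (p : ℕ)
    (φ : MultilinearMap ℝ (fun _ : Fin (p + 2) => E) ℝ)
    (hφsymm : ∀ σ : Equiv.Perm (Fin (p + 2)), ∀ v : Fin (p + 2) → E, φ (v ∘ σ) = φ v)
    (hφtr : ∀ v : Fin p → E, (∑ i, φ (Fin.cons (e i) (Fin.cons (e i) v))) = 0) :
    0 ≤ ((p : ℝ) + 2) * ((n : ℝ) + ((p : ℝ) + 2) - 2) * α *
        (∑ t : Fin (p + 2) → Fin n, (φ (fun m => e (t m))) ^ 2) ∧
    ((p : ℝ) + 2) * ((n : ℝ) + ((p : ℝ) + 2) - 2) * α *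
        (∑ t : Fin (p + 2) → Fin n, (φ (fun m => e (t m))) ^ 2) ≤
      weitzenbockQ e R p φ ∧
    (weitzenbockQ e R p φ = 0 → φ = 0) := by
  have hN : 0 ≤ ∑ t : Fin (p + 2) → Fin n, (φ (fun m => e (t m))) ^ 2 :=
    sum_nonneg fun _ _ => sq_nonneg _
  have hcoef : 0 < ((p : ℝ) + 2) * ((n : ℝ) + ((p : ℝ) + 2) - 2) * α := by
    have hn' : (2 : ℝ) ≤ n := by exact_mod_cast hn
    have hdim : (0 : ℝ) < n + (p + 2) - 2 := by linarith [p.cast_nonneg (α := ℝ)]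
    positivity
  have hmain := mul_sum_sq_le_weitzenbockQ e R hR1 hQ hRic φ hφsymm hφtr
  refine ⟨mul_nonneg hcoef.le hN, hmain, fun hzero => ?_⟩
  refine φ.eq_zero_of_sum_sq_basis_eq_zero e.toBasis ?_
  simp only [OrthonormalBasis.coe_toBasis]
  rw [hzero] at hmain
  exact le_antisymm (nonpos_of_mul_nonpos_right hmain hcoef) hN
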